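/- arXiv:2401.01770 — 3 statements merged into one kernel-verified Lean document; each statement's English description precedes it below -/
import Mathlib

section
/- Let Â be the infinite tridiagonal matrix with zero diagonal and symmetric off-diagonal entries c_k = (k+1)/√((2k+1)(2k+3)) > 0, and B̂ = (√2, 0, 0, …)ᵀ. Then the linear span of {Â^n B̂ : n ∈ ℕ} contains every standard basis vector e_k of ℓ², and hence is dense in ℓ²; consequently, the moment system ṁ = Âm + B̂u is approximately controllable. -/
/-!
The vector `Âⁿ B̂` vanishes beyond index `n` and has `n`-th entry `√2 ∏_{j<n} c_j ≠ 0`, so the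
family `(Âⁿ B̂)ₙ` is triangular with respect to the standard basis: by induction on `k`, each `e_k`
lies in its span, which is therefore dense in `ℓ²`.

Controllability holds for any bounded operator `A` on a Banach space and any `b` for which the
`Aⁿ b` span a dense subspace. Let `S` be the closure of the subspace of states reachable from `0`
at time `1`. The controls `1_{(0, x]}` reach `∫₀ˣ e^{(1-τ)A} b dτ`, and differentiating in `x`
puts `e^{sA} b` in `S` for `s ∈ [0, 1)`; differentiating repeatedly in `s` puts `Aⁿ e^{sA} b`, in
particular `Aⁿ b`, in `S`. Hence `S` is everything, and adding a reachable state to the free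
evolution `e^{A} x₀` brings it within `ε` of any target.
-/

open MeasureTheory

noncomputable def legendreCoeff (k : ℕ) : ℝ :=
  (k + 1) / Real.sqrt ((2 * k + 1) * (2 * k + 3))

open Set Filter Topology

section Triangular

variable {𝕜 : Type*} [NormedField 𝕜] {p : ENNReal}

theorem lp.eq_sum_single_of_forall_lt_eq_zero (x : lp (fun _ : ℕ => 𝕜) p) {n : ℕ}
    (hx : ∀ k, n < k → x k = 0) :
    x = ∑ k ∈ Finset.range (n + 1), lp.single p k (x k) := by
  ext j
  rw [lp.coeFn_sum, Finset.sum_apply]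
  simp only [lp.single_apply, Finset.sum_pi_single, Finset.mem_range]
  split_ifs with hj
  · rfl
  · exact hx j (by omega)

theorem single_mem_span_of_triangular (v : ℕ → lp (fun _ : ℕ => 𝕜) p)
    (hzero : ∀ n k, n < k → v n k = 0) (hdiag : ∀ n, v n n ≠ 0) (k : ℕ) :
    lp.single p k 1 ∈ Submodule.span 𝕜 (Set.range v) := by
  induction k using Nat.strong_induction_on with
  | _ k ih =>
    have hlower :
        ∑ m ∈ Finset.range k, lp.single p m (v k m) ∈ Submodule.span 𝕜 (Set.range v) := by
      refine Submodule.sum_mem _ fun m hm => ?_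
      simpa [← lp.single_smul] using Submodule.smul_mem _ (v k m) (ih m (Finset.mem_range.1 hm))
    have hdiag_mem : lp.single p k (v k k) ∈ Submodule.span 𝕜 (Set.range v) := by
      have hv := lp.eq_sum_single_of_forall_lt_eq_zero (v k) (hzero k)
      rw [Finset.sum_range_succ, ← sub_eq_iff_eq_add'] at hv
      rw [← hv]
      exact Submodule.sub_mem _ (Submodule.subset_span ⟨k, rfl⟩) hlower
    simpa [← lp.single_smul, inv_mul_cancel₀ (hdiag k)] using
      Submodule.smul_mem _ (v k k)⁻¹ hdiag_mem

theorem tridiagonal_iterate_apply (c : ℕ → 𝕜)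
    (A : lp (fun _ : ℕ => 𝕜) p → lp (fun _ : ℕ => 𝕜) p)
    (hA : ∀ ξ : lp (fun _ : ℕ => 𝕜) p, ∀ k : ℕ,
      (A ξ : ∀ _ : ℕ, 𝕜) k =
        (if k = 0 then 0 else c (k - 1) * (ξ : ∀ _ : ℕ, 𝕜) (k - 1))
          + c k * (ξ : ∀ _ : ℕ, 𝕜) (k + 1))
    (β : 𝕜) (B : lp (fun _ : ℕ => 𝕜) p)
    (hB : ∀ k : ℕ, (B : ∀ _ : ℕ, 𝕜) k = if k = 0 then β else 0) (n : ℕ) :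
    (∀ k, n < k → (A^[n] B : ∀ _ : ℕ, 𝕜) k = 0) ∧
      (A^[n] B : ∀ _ : ℕ, 𝕜) n = β * ∏ j ∈ Finset.range n, c j := by
  induction n with
  | zero => exact ⟨fun k hk => by simp [hB, hk.ne'], by simp [hB]⟩
  | succ n ih =>
    obtain ⟨hzero, hdiag⟩ := ih
    rw [Function.iterate_succ_apply']
    refine ⟨fun k hk => ?_, ?_⟩
    · rw [hA, hzero (k + 1) (by omega), hzero (k - 1) (by omega)]
      simp
    · rw [hA, hzero (n + 2) (by omega), Nat.add_sub_cancel, hdiag, Finset.prod_range_succ]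
      simp only [Nat.add_one_ne_zero, if_false, mul_zero, add_zero]
      ring

end Triangular

theorem lp.dense_of_forall_single_mem {ι 𝕜 : Type*} [DecidableEq ι] [NormedField 𝕜]
    {p : ENNReal} [Fact (1 ≤ p)] (hp : p ≠ ⊤) {S : Submodule 𝕜 (lp (fun _ : ι => 𝕜) p)}
    (hS : ∀ i, lp.single p i 1 ∈ S) : Dense (S : Set (lp (fun _ : ι => 𝕜) p)) := by
  intro x
  refine mem_closure_of_tendsto (lp.hasSum_single hp x) (Eventually.of_forall fun s => ?_)
  refine Submodule.sum_mem _ fun i _ => ?_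
  simpa [← lp.single_smul] using S.smul_mem (x i) (hS i)

theorem HasDerivAt.mem_of_eventually_mem {E : Type*} [NormedAddCommGroup E] [NormedSpace ℝ E]
    {S : Submodule ℝ E} (hS : IsClosed (S : Set E)) {g : ℝ → E} {g' : E} {x : ℝ}
    (hg : HasDerivAt g g' x) {l : Filter ℝ} [l.NeBot] (hl : l ≤ 𝓝[≠] x) (hx : g x ∈ S)
    (hmem : ∀ᶠ y in l, g y ∈ S) : g' ∈ S :=
  hS.mem_of_tendsto ((hasDerivAt_iff_tendsto_slope.1 hg).mono_left hl) <|
    hmem.mono fun y hy => by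
      rw [slope_def_module]
      exact S.smul_mem _ (S.sub_mem hy hx)

section Control

variable {E : Type*} [NormedAddCommGroup E] [NormedSpace ℝ E] (A : E →L[ℝ] E) (b : E)

open NormedSpace

/-- The state reached at time `1` from `0` under the control `u` of `ṁ = A m + u b`. -/
noncomputable def controlResponse (u : ℝ → ℝ) : E :=
  ∫ τ in Ioc (0 : ℝ) 1, exp ((1 - τ) • A) (u τ • b)

theorem controlResponse_smul (c : ℝ) (u : ℝ → ℝ) :
    controlResponse A b (c • u) = c • controlResponse A b u := by
  simp only [controlResponse, ← integral_smul, Pi.smul_apply, smul_eq_mul, mul_smul, map_smul]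

theorem controlResponse_indicator {x : ℝ} (hx : x ∈ Icc 0 1) :
    controlResponse A b ((Ioc 0 x).indicator (1 : ℝ → ℝ)) =
      ∫ τ in (0)..x, exp ((1 - τ) • A) b := by
  have hres : ∀ τ, exp ((1 - τ) • A) ((Ioc 0 x).indicator (1 : ℝ → ℝ) τ • b) =
      (Ioc 0 x).indicator (fun τ => exp ((1 - τ) • A) b) τ := by
    intro τ
    by_cases hτ : τ ∈ Ioc 0 x <;> simp [hτ]
  rw [controlResponse, funext hres, setIntegral_indicator measurableSet_Ioc,
    inter_eq_right.2 (Ioc_subset_Ioc_right hx.2), intervalIntegral.integral_of_le hx.1]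

variable [CompleteSpace E]

theorem continuous_exp_smul_apply : Continuous fun s : ℝ => exp (s • A) b :=
  continuous_iff_continuousAt.2 fun s =>
    (hasDerivAt_exp_smul_const' A s).continuousAt.clm_apply continuousAt_const

theorem hasDerivAt_pow_apply_exp_smul_apply (n : ℕ) (s : ℝ) :
    HasDerivAt (fun t : ℝ => (A ^ n) (exp (t • A) b)) ((A ^ (n + 1)) (exp (s • A) b)) s := by
  rw [pow_succ]
  exact ((A ^ n).comp (ContinuousLinearMap.apply ℝ E b)).hasFDerivAt.comp_hasDerivAt s
    (hasDerivAt_exp_smul_const' A s)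

theorem integrableOn_exp_smul_apply_control {u : ℝ → ℝ} (hu : Measurable u) {C : ℝ}
    (hC : ∀ t, |u t| ≤ C) :
    IntegrableOn (fun τ => exp ((1 - τ) • A) (u τ • b)) (Ioc 0 1) := by
  simp_rw [map_smul]
  exact ((continuous_exp_smul_apply A b).comp
    (continuous_const.sub continuous_id)).integrableOn_Ioc.bdd_smul C hu.aestronglyMeasurable
    (ae_of_all _ hC)

theorem controlResponse_add {u₁ u₂ : ℝ → ℝ} (hu₁ : Measurable u₁) (hu₂ : Measurable u₂)
    {C₁ C₂ : ℝ} (hC₁ : ∀ t, |u₁ t| ≤ C₁) (hC₂ : ∀ t, |u₂ t| ≤ C₂) :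
    controlResponse A b (u₁ + u₂) = controlResponse A b u₁ + controlResponse A b u₂ := by
  rw [controlResponse, controlResponse, controlResponse,
    ← integral_add (integrableOn_exp_smul_apply_control A b hu₁ hC₁)
      (integrableOn_exp_smul_apply_control A b hu₂ hC₂)]
  simp only [Pi.add_apply, add_smul, map_add]

def reachableSubmodule : Submodule ℝ E where
  carrier := {w | ∃ u : ℝ → ℝ, Measurable u ∧ (∃ C, ∀ t, |u t| ≤ C) ∧ controlResponse A b u = w}
  zero_mem' := ⟨0, measurable_const, ⟨0, by simp⟩, by simp [controlResponse]⟩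
  add_mem' := by
    rintro _ _ ⟨u₁, hu₁, ⟨C₁, hC₁⟩, rfl⟩ ⟨u₂, hu₂, ⟨C₂, hC₂⟩, rfl⟩
    exact ⟨u₁ + u₂, hu₁.add hu₂,
      ⟨C₁ + C₂, fun t => (abs_add_le _ _).trans (add_le_add (hC₁ t) (hC₂ t))⟩,
      controlResponse_add A b hu₁ hu₂ hC₁ hC₂⟩
  smul_mem' := by
    rintro c _ ⟨u, hu, ⟨C, hC⟩, rfl⟩
    refine ⟨c • u, hu.const_smul c, ⟨|c| * C, fun t => ?_⟩, controlResponse_smul A b c u⟩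
    rw [Pi.smul_apply, smul_eq_mul, abs_mul]
    exact mul_le_mul_of_nonneg_left (hC t) (abs_nonneg c)

theorem exp_smul_apply_mem_closure_reachable {s : ℝ} (hs : s ∈ Ico 0 1) :
    exp (s • A) b ∈ (reachableSubmodule A b).topologicalClosure := by
  set S := (reachableSubmodule A b).topologicalClosure
  set F : ℝ → E := fun x => ∫ τ in (0)..x, exp ((1 - τ) • A) b
  have hF_mem : ∀ x ∈ Icc (0 : ℝ) 1, F x ∈ S := fun x hx =>
    Submodule.le_topologicalClosure _ ⟨(Ioc 0 x).indicator 1,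
      measurable_const.indicator measurableSet_Ioc,
      ⟨1, fun t => by by_cases ht : t ∈ Ioc 0 x <;> simp [ht]⟩, controlResponse_indicator A b hx⟩
  have hF_deriv : HasDerivAt F (exp (s • A) b) (1 - s) := by
    have hg : Continuous fun τ : ℝ => exp ((1 - τ) • A) b :=
      (continuous_exp_smul_apply A b).comp (continuous_const.sub continuous_id)
    simpa using (hg.integral_hasStrictDerivAt 0 (1 - s)).hasDerivAt
  refine hF_deriv.mem_of_eventually_mem (Submodule.isClosed_topologicalClosure _)
    (nhdsLT_le_nhdsNE _) (hF_mem _ ⟨by linarith [hs.2], by linarith [hs.1]⟩) ?_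
  filter_upwards [Ioo_mem_nhdsLT (by linarith [hs.2] : 0 < 1 - s)] with y hy
  exact hF_mem y ⟨hy.1.le, by linarith [hy.2, hs.1]⟩

theorem pow_apply_exp_smul_apply_mem_closure_reachable (n : ℕ) {s : ℝ} (hs : s ∈ Ico 0 1) :
    (A ^ n) (exp (s • A) b) ∈ (reachableSubmodule A b).topologicalClosure := by
  induction n generalizing s with
  | zero => exact exp_smul_apply_mem_closure_reachable A b hs
  | succ n ih =>
    refine (hasDerivAt_pow_apply_exp_smul_apply A b n s).mem_of_eventually_mem
      (Submodule.isClosed_topologicalClosure _) (nhdsGT_le_nhdsNE _) (ih hs) ?_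
    filter_upwards [Ioo_mem_nhdsGT hs.2] with y hy
    exact ih ⟨hs.1.trans hy.1.le, hy.2⟩

theorem span_pow_apply_le_closure_reachable :
    Submodule.span ℝ (range fun n : ℕ => (A ^ n) b) ≤
      (reachableSubmodule A b).topologicalClosure := by
  rw [Submodule.span_le]
  rintro _ ⟨n, rfl⟩
  have h := pow_apply_exp_smul_apply_mem_closure_reachable A b n (s := 0) ⟨le_rfl, one_pos⟩
  rwa [zero_smul, exp_zero, one_apply_eq_self] at h

theorem approximatelyControllable_of_dense_span
    (h : Dense (Submodule.span ℝ (range fun n : ℕ => (A ^ n) b) : Set E))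
    (x₀ x₁ : E) {ε : ℝ} (hε : 0 < ε) :
    ∃ T : ℝ, 0 < T ∧ ∃ u : ℝ → ℝ, Measurable u ∧ (∃ C : ℝ, ∀ t : ℝ, |u t| ≤ C) ∧
      ‖exp (T • A) x₀ + (∫ τ in Ioc (0 : ℝ) T, exp ((T - τ) • A) (u τ • b)) - x₁‖ < ε := by
  have hreach : Dense (reachableSubmodule A b : Set E) := by
    rw [← dense_closure, ← Submodule.topologicalClosure_coe]
    exact h.mono (span_pow_apply_le_closure_reachable A b)
  obtain ⟨_, ⟨u, hu, hC, rfl⟩, hdist⟩ := hreach.exists_dist_lt (x₁ - exp ((1 : ℝ) • A) x₀) hε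
  refine ⟨1, one_pos, u, hu, hC, ?_⟩
  rw [dist_comm, dist_eq_norm] at hdist
  calc ‖exp ((1 : ℝ) • A) x₀ + controlResponse A b u - x₁‖
      = ‖controlResponse A b u - (x₁ - exp ((1 : ℝ) • A) x₀)‖ := by congr 1; abel
    _ < ε := hdist

end Control

/-- For the tridiagonal moment operator `Â` with coefficients `c_k > 0` and
`B̂ = (√2, 0, 0, …)ᵀ`, the span of `{Â^n B̂}` contains every standard basis vector,
hence is dense in `ℓ²`; consequently the moment system `ṁ = Âm + B̂u` is approximately
controllable. -/
theorem tridiagonal_moment_system_approximately_controllable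
    (A : lp (fun _ : ℕ => ℝ) 2 →L[ℝ] lp (fun _ : ℕ => ℝ) 2)
    (hA : ∀ ξ : lp (fun _ : ℕ => ℝ) 2, ∀ k : ℕ,
      (A ξ : ∀ _ : ℕ, ℝ) k =
        (if k = 0 then 0 else legendreCoeff (k - 1) * (ξ : ∀ _ : ℕ, ℝ) (k - 1))
          + legendreCoeff k * (ξ : ∀ _ : ℕ, ℝ) (k + 1))
    (Bv : lp (fun _ : ℕ => ℝ) 2)
    (hBv : ∀ k : ℕ, (Bv : ∀ _ : ℕ, ℝ) k = if k = 0 then Real.sqrt 2 else 0) :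
    (∀ k : ℕ, lp.single 2 k (1 : ℝ) ∈
        Submodule.span ℝ (Set.range fun n : ℕ => (A ^ n) Bv)) ∧
    Dense (Submodule.span ℝ (Set.range fun n : ℕ => (A ^ n) Bv) :
        Set (lp (fun _ : ℕ => ℝ) 2)) ∧
    (∀ x0 xF : lp (fun _ : ℕ => ℝ) 2, ∀ ε : ℝ, 0 < ε →
      ∃ T : ℝ, 0 < T ∧ ∃ u : ℝ → ℝ, Measurable u ∧ (∃ C : ℝ, ∀ t : ℝ, |u t| ≤ C) ∧
        ‖NormedSpace.exp (T • A) x0 +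
            (∫ τ in Set.Ioc (0 : ℝ) T, NormedSpace.exp ((T - τ) • A) (u τ • Bv)) - xF‖ < ε) := by
  have hc : ∀ k, legendreCoeff k ≠ 0 := fun k => by unfold legendreCoeff; positivity
  have htri := tridiagonal_iterate_apply legendreCoeff A hA (Real.sqrt 2) Bv hBv
  have hspan : ∀ k : ℕ, lp.single 2 k (1 : ℝ) ∈
      Submodule.span ℝ (Set.range fun n : ℕ => (A ^ n) Bv) := by
    have hiter : ∀ n, (A ^ n) Bv = A^[n] Bv := fun n => by
      rw [← ContinuousLinearMap.coe_coe, ContinuousLinearMap.toLinearMap_pow,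
        Module.End.pow_apply, ContinuousLinearMap.coe_coe]
    simp_rw [hiter]
    refine single_mem_span_of_triangular _ (fun n => (htri n).1) fun n => ?_
    rw [(htri n).2]
    exact mul_ne_zero (by positivity) (Finset.prod_ne_zero_iff.2 fun j _ => hc j)
  have hdense := lp.dense_of_forall_single_mem (by norm_num) hspan
  exact ⟨hspan, hdense, fun x0 xF _ hε =>
    approximatelyControllable_of_dense_span A Bv hdense x0 xF hε⟩
end

section
/- Let A = [[0,1],[−1,0]] and consider the block-tridiagonal operator Â = C ⊗ A on ℓ²(ℝ²), where C is the tridiagonal matrix with off-diagonal entries c_k > 0, and B̂ = (√2, 0, 0, 0, …)ᵀ placed in the first coordinate of the first ℝ²-block (i.e., B̂ = e_0 ⊗ (√2, 0)ᵀ). Then the vector v = e_0 ⊗ (0,1)ᵀ is orthogonal to Â^n B̂ for all n ∈ ℕ; hence the span of {Â^n B̂} is not dense in ℓ²(ℝ²), and the harmonic-oscillator ensemble dx/dt(t,β) = β A x(t,β) + (1,0)ᵀ u(t) is not approximately controllable through its moment system. -/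
theorem ContinuousLinearMap.pow_apply_mem_of_forall_mem {R M : Type*} [Semiring R]
    [TopologicalSpace M] [AddCommMonoid M] [Module R M] {A : M →L[R] M} {p : Submodule R M}
    (n : ℕ) (hA : ∀ x ∈ p, A x ∈ p) {x : M} (hx : x ∈ p) : (A ^ n) x ∈ p := by
  rw [← ContinuousLinearMap.coe_coe, ContinuousLinearMap.toLinearMap_pow]
  exact Module.End.pow_apply_mem_of_forall_mem n hA x hx

open Submodule in
theorem not_dense_span_of_forall_inner_eq_zero {𝕜 E : Type*} [RCLike 𝕜] [NormedAddCommGroup E]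
    [InnerProductSpace 𝕜 E] {s : Set E} {v : E} (hv : v ≠ 0)
    (h : ∀ x ∈ s, inner 𝕜 v x = 0) : ¬ Dense (span 𝕜 s : Set E) := by
  intro hdense
  have hspan : span 𝕜 s ≤ (𝕜 ∙ v)ᗮ :=
    span_le.mpr fun x hx => mem_orthogonal_singleton_iff_inner_right.mpr (h x hx)
  have hv_mem : v ∈ (𝕜 ∙ v)ᗮ := by
    have := (isClosed_orthogonal (𝕜 ∙ v)).closure_subset_iff.mpr hspan
    exact this (hdense.closure_eq ▸ Set.mem_univ v)
  exact hv (inner_self_eq_zero.mp (mem_orthogonal_singleton_iff_inner_right.mp hv_mem))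

theorem lp.inner_eq_inner_zero_of_forall_ne_zero {𝕜 : Type*} [RCLike 𝕜] {G : ℕ → Type*}
    [∀ i, NormedAddCommGroup (G i)] [∀ i, InnerProductSpace 𝕜 (G i)] (f g : lp G 2)
    (hf : ∀ k, k ≠ 0 → f k = 0) : inner 𝕜 f g = inner 𝕜 (f 0) (g 0) := by
  rw [lp.inner_eq_tsum]
  exact tsum_eq_single 0 fun k hk => by rw [hf k hk, inner_zero_left]

open scoped lp

def alternatingAxes : Submodule ℝ ℓ²(ℕ, EuclideanSpace ℝ (Fin 2)) where
  carrier := {m | ∀ k, (Even k → m k 1 = 0) ∧ (Odd k → m k 0 = 0)}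
  add_mem' ha hb k :=
    ⟨fun hk => by simp [(ha k).1 hk, (hb k).1 hk], fun hk => by simp [(ha k).2 hk, (hb k).2 hk]⟩
  zero_mem' k := by simp
  smul_mem' _ _ hm k := ⟨fun hk => by simp [(hm k).1 hk], fun hk => by simp [(hm k).2 hk]⟩

theorem map_mem_alternatingAxes {J : EuclideanSpace ℝ (Fin 2) →L[ℝ] EuclideanSpace ℝ (Fin 2)}
    (hJ0 : ∀ x : EuclideanSpace ℝ (Fin 2), J x 0 = x 1)
    (hJ1 : ∀ x : EuclideanSpace ℝ (Fin 2), J x 1 = -x 0)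
    {c : ℕ → ℝ} {A : ℓ²(ℕ, EuclideanSpace ℝ (Fin 2)) →L[ℝ] ℓ²(ℕ, EuclideanSpace ℝ (Fin 2))}
    (hA : ∀ m : ℓ²(ℕ, EuclideanSpace ℝ (Fin 2)), ∀ k : ℕ,
      A m k = (if k = 0 then 0 else c (k - 1) • J (m (k - 1))) + c k • J (m (k + 1)))
    {m : ℓ²(ℕ, EuclideanSpace ℝ (Fin 2))} (hm : m ∈ alternatingAxes) : A m ∈ alternatingAxes := by
  have hJ_even : ∀ j, Even j → J (m j) 0 = 0 := fun j hj => by rw [hJ0, (hm j).1 hj]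
  have hJ_odd : ∀ j, Odd j → J (m j) 1 = 0 := fun j hj => by rw [hJ1, (hm j).2 hj, neg_zero]
  intro k
  rw [hA]
  refine ⟨fun hk => ?_, fun hk => ?_⟩
  · have hk_succ : Odd (k + 1) := hk.add_one
    split_ifs with hk0
    · simp [hJ_odd _ hk_succ]
    · have hk_pred : Odd (k - 1) := Nat.Even.sub_odd (by omega) hk odd_one
      simp [hJ_odd _ hk_succ, hJ_odd _ hk_pred]
  · have hk_succ : Even (k + 1) := hk.add_one
    have hk_pred : Even (k - 1) := Nat.Odd.sub_odd hk odd_one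
    simp [hk.pos.ne', hJ_even _ hk_succ, hJ_even _ hk_pred]

theorem inner_eq_zero_of_mem_alternatingAxes {v m : ℓ²(ℕ, EuclideanSpace ℝ (Fin 2))}
    (hv00 : v 0 0 = 0) (hvk : ∀ k : ℕ, 1 ≤ k → v k = 0) (hm : m ∈ alternatingAxes) :
    inner ℝ v m = 0 := by
  have hv : ∀ k, k ≠ 0 → v k = 0 := fun k hk => hvk k (Nat.one_le_iff_ne_zero.mpr hk)
  rw [lp.inner_eq_inner_zero_of_forall_ne_zero v m hv, PiLp.inner_apply, Fin.sum_univ_two]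
  simp [hv00, (hm 0).1 Even.zero]

theorem oscillator_moment_system_not_controllable_general
    (J : EuclideanSpace ℝ (Fin 2) →L[ℝ] EuclideanSpace ℝ (Fin 2))
    (hJ0 : ∀ x : EuclideanSpace ℝ (Fin 2), J x 0 = x 1)
    (hJ1 : ∀ x : EuclideanSpace ℝ (Fin 2), J x 1 = -x 0)
    (A : lp (fun _ : ℕ => EuclideanSpace ℝ (Fin 2)) 2 →L[ℝ]
        lp (fun _ : ℕ => EuclideanSpace ℝ (Fin 2)) 2)
    (hA : ∀ m : lp (fun _ : ℕ => EuclideanSpace ℝ (Fin 2)) 2, ∀ k : ℕ,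
      (A m : ∀ _ : ℕ, EuclideanSpace ℝ (Fin 2)) k =
        (if k = 0 then 0 else
          legendreCoeff (k - 1) • J ((m : ∀ _ : ℕ, EuclideanSpace ℝ (Fin 2)) (k - 1)))
          + legendreCoeff k • J ((m : ∀ _ : ℕ, EuclideanSpace ℝ (Fin 2)) (k + 1)))
    (Bv : lp (fun _ : ℕ => EuclideanSpace ℝ (Fin 2)) 2)
    (hBv1 : (Bv : ∀ _ : ℕ, EuclideanSpace ℝ (Fin 2)) 0 1 = 0)
    (hBvk : ∀ k : ℕ, 1 ≤ k → (Bv : ∀ _ : ℕ, EuclideanSpace ℝ (Fin 2)) k = 0)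
    (v : lp (fun _ : ℕ => EuclideanSpace ℝ (Fin 2)) 2)
    (hv00 : (v : ∀ _ : ℕ, EuclideanSpace ℝ (Fin 2)) 0 0 = 0)
    (hv01 : (v : ∀ _ : ℕ, EuclideanSpace ℝ (Fin 2)) 0 1 = 1)
    (hvk : ∀ k : ℕ, 1 ≤ k → (v : ∀ _ : ℕ, EuclideanSpace ℝ (Fin 2)) k = 0) :
    (∀ n : ℕ, (inner ℝ v ((A ^ n) Bv) : ℝ) = 0) ∧
    ¬ Dense (Submodule.span ℝ (Set.range fun n : ℕ => (A ^ n) Bv) :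
        Set (lp (fun _ : ℕ => EuclideanSpace ℝ (Fin 2)) 2)) := by
  have hBv : Bv ∈ alternatingAxes := by
    intro k
    rcases Nat.eq_zero_or_pos k with rfl | hk
    · exact ⟨fun _ => hBv1, fun h => absurd h Nat.not_odd_zero⟩
    · simp [hBvk k hk]
  have horth : ∀ n : ℕ, inner ℝ v ((A ^ n) Bv) = 0 := fun n =>
    inner_eq_zero_of_mem_alternatingAxes hv00 hvk
      (A.pow_apply_mem_of_forall_mem n (fun _ => map_mem_alternatingAxes hJ0 hJ1 hA) hBv)
  have hv : v ≠ 0 := by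
    rintro rfl
    simp at hv01
  exact ⟨horth, not_dense_span_of_forall_inner_eq_zero hv (by rintro _ ⟨n, rfl⟩; exact horth n)⟩

/-- For the harmonic-oscillator moment operator `Â = C ⊗ A` (with `A = [[0,1],[−1,0]]`)
and `B̂ = e₀ ⊗ (√2, 0)ᵀ`, the vector `v = e₀ ⊗ (0,1)ᵀ` is orthogonal to every `Â^n B̂`;
hence the span of `{Â^n B̂}` is not dense in `ℓ²(ℝ²)` and the oscillator ensemble is not
approximately controllable through its moment system. -/
theorem oscillator_moment_system_not_controllable
    (J : EuclideanSpace ℝ (Fin 2) →L[ℝ] EuclideanSpace ℝ (Fin 2))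
    (hJ0 : ∀ x : EuclideanSpace ℝ (Fin 2), J x 0 = x 1)
    (hJ1 : ∀ x : EuclideanSpace ℝ (Fin 2), J x 1 = -x 0)
    (A : lp (fun _ : ℕ => EuclideanSpace ℝ (Fin 2)) 2 →L[ℝ]
        lp (fun _ : ℕ => EuclideanSpace ℝ (Fin 2)) 2)
    (hA : ∀ m : lp (fun _ : ℕ => EuclideanSpace ℝ (Fin 2)) 2, ∀ k : ℕ,
      (A m : ∀ _ : ℕ, EuclideanSpace ℝ (Fin 2)) k =
        (if k = 0 then 0 else
          legendreCoeff (k - 1) • J ((m : ∀ _ : ℕ, EuclideanSpace ℝ (Fin 2)) (k - 1)))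
          + legendreCoeff k • J ((m : ∀ _ : ℕ, EuclideanSpace ℝ (Fin 2)) (k + 1)))
    (Bv : lp (fun _ : ℕ => EuclideanSpace ℝ (Fin 2)) 2)
    (hBv0 : (Bv : ∀ _ : ℕ, EuclideanSpace ℝ (Fin 2)) 0 0 = Real.sqrt 2)
    (hBv1 : (Bv : ∀ _ : ℕ, EuclideanSpace ℝ (Fin 2)) 0 1 = 0)
    (hBvk : ∀ k : ℕ, 1 ≤ k → (Bv : ∀ _ : ℕ, EuclideanSpace ℝ (Fin 2)) k = 0)
    (v : lp (fun _ : ℕ => EuclideanSpace ℝ (Fin 2)) 2)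
    (hv00 : (v : ∀ _ : ℕ, EuclideanSpace ℝ (Fin 2)) 0 0 = 0)
    (hv01 : (v : ∀ _ : ℕ, EuclideanSpace ℝ (Fin 2)) 0 1 = 1)
    (hvk : ∀ k : ℕ, 1 ≤ k → (v : ∀ _ : ℕ, EuclideanSpace ℝ (Fin 2)) k = 0) :
    (∀ n : ℕ, (inner ℝ v ((A ^ n) Bv) : ℝ) = 0) ∧
    ¬ Dense (Submodule.span ℝ (Set.range fun n : ℕ => (A ^ n) Bv) :
        Set (lp (fun _ : ℕ => EuclideanSpace ℝ (Fin 2)) 2)) :=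
  oscillator_moment_system_not_controllable_general J hJ0 hJ1 A hA Bv hBv1 hBvk v hv00 hv01 hvk
end

section
/- Let D be a bounded self-adjoint b-banded infinite matrix on ℓ² with spectrum contained in [−1,1], and let F be a function analytic on a neighborhood of the closed Bernstein ellipse E_χ (χ > 1) with M(χ) = max_{z ∈ E_χ} |F(z)|. Then the entries of F(D) decay exponentially: |[F(D)]_{ij}| ≤ K ρ^{|i−j|} with ρ = χ^{−2/b} and K = max{2χM(χ)/(χ−1), ‖F(D)‖}. -/
open scoped ComplexOrder

/-- The closed Bernstein ellipse `E_χ` with foci `±1` and semi-axes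
`(χ+χ⁻¹)/2`, `(χ−χ⁻¹)/2`. -/
def bernsteinEllipse (χ : ℝ) : Set ℂ :=
  {z : ℂ | z.re ^ 2 / (χ + χ⁻¹) ^ 2 + z.im ^ 2 / (χ - χ⁻¹) ^ 2 ≤ 1 / 4}

/-!
Truncating the Chebyshev expansion `F = ∑ₙ cₙ Tₙ` at degree `k` gives a polynomial `q` with
`|F - q| ≤ 2 M χ^{-k} / (χ - 1)` on `[-1, 1]`. Indeed `cₙ` is the `n`-th Fourier coefficient of
`θ ↦ F (cos θ)`; under `z = e^{iθ}` it becomes a Laurent coefficient of `z ↦ F ((z + z⁻¹) / 2)`,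
which is holomorphic on the annulus `χ⁻¹ ≤ |z| ≤ χ` because the Joukowski map sends that annulus
into `E_χ`, so Cauchy's estimate on the circles `|z| = χ^{±1}` gives `|cₙ| ≤ M χ^{-|n|}`.

Since `D` is `b/2`-banded, `q(D)` is `k b/2`-banded, so for `k b/2 < |i - j|` the `(i, j)` entry
of `F(D)` is that of `F(D) - q(D) = (F - q)(D)`, whose norm is at most `sup_{[-1,1]} |F - q|`.
Taking `k ≈ 2|i - j| / b - 1` gives the decay.
-/

noncomputable section

open Real

lemma two_le_add_inv {t : ℝ} (ht : 0 < t) : 2 ≤ t + t⁻¹ := by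
  have : t + t⁻¹ - 2 = (t - 1) ^ 2 / t := by field_simp; ring
  linarith [div_nonneg (sq_nonneg (t - 1)) ht.le]

lemma add_inv_le_add_inv {a t : ℝ} (ht : 0 < t) (h1 : a⁻¹ ≤ t) (h2 : t ≤ a) :
    t + t⁻¹ ≤ a + a⁻¹ := by
  have ha : 0 < a := ht.trans_le h2
  have hat : 1 ≤ a * t := by rwa [inv_le_iff_one_le_mul₀' ha] at h1
  have : a + a⁻¹ - (t + t⁻¹) = (a - t) * (a * t - 1) / (a * t) := by field_simp; ring
  have : 0 ≤ (a - t) * (a * t - 1) / (a * t) :=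
    div_nonneg (mul_nonneg (sub_nonneg.2 h2) (sub_nonneg.2 hat)) (by positivity)
  linarith

lemma hasSum_geometric_tail {r : ℝ} (h₀ : 0 ≤ r) (h₁ : r < 1) (k : ℕ) :
    HasSum (fun m : ℕ => if m ≤ k then 0 else r ^ m) (r ^ (k + 1) / (1 - r)) := by
  rw [← hasSum_nat_add_iff' (k + 1)]
  have hhead : ∑ m ∈ Finset.range (k + 1), (if m ≤ k then 0 else r ^ m) = 0 :=
    Finset.sum_eq_zero fun m hm => if_pos (Nat.lt_succ_iff.1 (Finset.mem_range.1 hm))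
  have hshift : ∀ m : ℕ, (if m + (k + 1) ≤ k then 0 else r ^ (m + (k + 1))) = r ^ (k + 1) * r ^ m :=
    fun m => by rw [if_neg (by omega), pow_add, mul_comm]
  simp only [hhead, sub_zero, hshift]
  exact (hasSum_geometric_of_lt_one h₀ h₁).mul_left _

lemma hasSum_geometric_natAbs_tail {r : ℝ} (h₀ : 0 ≤ r) (h₁ : r < 1) (k : ℕ) :
    HasSum (fun n : ℤ => if n.natAbs ≤ k then 0 else r ^ n.natAbs) (2 * r ^ (k + 1) / (1 - r)) := by
  have h := HasSum.of_nat_of_neg (f := fun n : ℤ => if n.natAbs ≤ k then 0 else r ^ n.natAbs)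
    (by simpa using hasSum_geometric_tail h₀ h₁ k) (by simpa using hasSum_geometric_tail h₀ h₁ k)
  simpa [two_mul, add_div] using h

lemma exists_nat_mul_lt_and_div_le_succ {w x : ℝ} (hw : 0 ≤ w) (hx : 0 < x) :
    ∃ k : ℕ, k * w < x ∧ x / w ≤ k + 1 := by
  rcases hw.eq_or_lt with rfl | hw
  · exact ⟨0, by simpa using hx, by simp⟩
  have hxw : 0 < x / w := div_pos hx hw
  refine ⟨⌈x / w⌉₊ - 1, ?_, ?_⟩ <;>
    rw [Nat.cast_sub (Nat.one_le_iff_ne_zero.2 (Nat.ceil_pos.2 hxw).ne'), Nat.cast_one]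
  · rw [← lt_div_iff₀ hw]
    linarith [Nat.ceil_lt_add_one hxw.le]
  · linarith [Nat.le_ceil (x / w)]

lemma inv_pow_succ_le_rpow_pow {χ w : ℝ} (hχ : 1 ≤ χ) {n k : ℕ} (h : n / w ≤ k + 1) :
    χ⁻¹ ^ (k + 1) ≤ (χ ^ (-w⁻¹)) ^ n := by
  have hχ₀ : 0 ≤ χ := zero_le_one.trans hχ
  rw [← Real.rpow_mul_natCast hχ₀, inv_pow, ← Real.rpow_natCast, ← Real.rpow_neg hχ₀]
  apply Real.rpow_le_rpow_of_exponent_le hχ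
  rw [div_eq_mul_inv] at h
  push_cast
  linarith

lemma circleIntegral_eq_of_differentiableAt_annulus {G : ℂ → ℂ} {r R ρ₁ ρ₂ : ℝ} (hr : 0 < r)
    (hG : ∀ z : ℂ, r ≤ ‖z‖ → ‖z‖ ≤ R → DifferentiableAt ℂ G z)
    (hρ₁ : ρ₁ ∈ Set.Icc r R) (hρ₂ : ρ₂ ∈ Set.Icc r R) :
    (∮ z in C(0, ρ₁), G z) = ∮ z in C(0, ρ₂), G z := by
  wlog h : ρ₁ ≤ ρ₂ generalizing ρ₁ ρ₂
  · exact (this hρ₂ hρ₁ (le_of_not_ge h)).symm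
  refine (Complex.circleIntegral_eq_of_differentiable_on_annulus_off_countable
    (hr.trans_le hρ₁.1) h Set.countable_empty ?_ fun z hz => ?_).symm
  · intro z ⟨hz₂, hz₁⟩
    simp only [Metric.mem_closedBall, Metric.mem_ball, dist_zero_right, not_lt] at hz₁ hz₂
    exact (hG z (hρ₁.1.trans hz₁) (hz₂.trans hρ₂.2)).continuousAt.continuousWithinAt
  · obtain ⟨⟨hz₂, hz₁⟩, -⟩ := hz
    simp only [Metric.mem_closedBall, Metric.mem_ball, dist_zero_right, not_le] at hz₁ hz₂
    exact hG z (hρ₁.1.trans hz₁.le) (hz₂.le.trans hρ₂.2)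

namespace Polynomial.Chebyshev

lemma norm_eval_T_le_one (n : ℤ) {x : ℝ} (hx : x ∈ Set.Icc (-1 : ℝ) 1) :
    ‖(T ℂ n).eval (x : ℂ)‖ ≤ 1 := by
  rw [← cos_arccos hx.1 hx.2, Complex.ofReal_cos, T_complex_cos,
    ← Complex.ofReal_intCast, ← Complex.ofReal_mul, ← Complex.ofReal_cos, Complex.norm_real,
    Real.norm_eq_abs]
  exact abs_cos_le_one _

end Polynomial.Chebyshev

local instance : Fact (0 < 2 * π) := ⟨two_pi_pos⟩

lemma fourier_coe_two_pi (n : ℤ) (θ : ℝ) :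
    fourier n (θ : AddCircle (2 * π)) = Complex.exp (n * θ * Complex.I) := by
  rw [fourier_coe_apply]
  congr 1
  push_cast
  field_simp

def cosCircle : C(AddCircle (2 * π), ℂ) := (1 / 2 : ℂ) • (fourier 1 + fourier (-1))

lemma cosCircle_coe (θ : ℝ) : cosCircle θ = Complex.cos θ := by
  simp only [cosCircle, ContinuousMap.smul_apply, ContinuousMap.add_apply, fourier_coe_two_pi,
    Complex.cos, smul_eq_mul]
  push_cast
  ring_nf

lemma circleIntegral_zpow_mul_joukowski (F : ℂ → ℂ) (n : ℤ) :
    (∮ z in C(0, 1), z ^ (-n - 1) * F ((z + z⁻¹) / 2)) =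
      2 * π * Complex.I * fourierCoeff (fun x => F (cosCircle x)) n := by
  have hpt : ∀ θ : ℝ, deriv (circleMap 0 1) θ • ((circleMap 0 1 θ) ^ (-n - 1) *
      F ((circleMap 0 1 θ + (circleMap 0 1 θ)⁻¹) / 2)) =
      Complex.I * (fourier (-n) (θ : AddCircle (2 * π)) • F (cosCircle θ)) := by
    intro θ
    have he : circleMap 0 1 θ = Complex.exp (θ * Complex.I) := by simp [circleMap]
    have hcos : (Complex.exp (θ * Complex.I) + (Complex.exp (θ * Complex.I))⁻¹) / 2 =
        Complex.cos θ := by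
      rw [← Complex.exp_neg, Complex.cos]; ring_nf
    have hpow : Complex.exp (θ * Complex.I) * Complex.exp (θ * Complex.I) ^ (-n - 1) =
        fourier (-n) (θ : AddCircle (2 * π)) := by
      rw [← zpow_one_add₀ (Complex.exp_ne_zero _), fourier_coe_two_pi, ← Complex.exp_int_mul]
      push_cast; ring_nf
    rw [deriv_circleMap, he, hcos, cosCircle_coe, ← hpow, smul_eq_mul, smul_eq_mul]
    ring
  rw [circleIntegral, funext hpt, intervalIntegral.integral_const_mul,
    fourierCoeff_eq_intervalIntegral _ n 0, zero_add, Complex.real_smul]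
  push_cast
  field_simp

namespace BernsteinEllipse

lemma ofReal_mem {χ : ℝ} (hχ : 1 < χ) {x : ℝ} (hx : x ∈ Set.Icc (-1 : ℝ) 1) :
    (x : ℂ) ∈ bernsteinEllipse χ := by
  have h2 := two_le_add_inv (zero_lt_one.trans hχ)
  have hx2 : x ^ 2 ≤ 1 := by nlinarith [hx.1, hx.2]
  show x ^ 2 / (χ + χ⁻¹) ^ 2 + 0 ^ 2 / (χ - χ⁻¹) ^ 2 ≤ 1 / 4
  rw [zero_pow two_ne_zero, zero_div, add_zero, div_le_iff₀ (by positivity)]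
  nlinarith

lemma joukowski_mem {χ : ℝ} (hχ : 1 < χ) {w : ℂ} (h1 : χ⁻¹ ≤ ‖w‖) (h2 : ‖w‖ ≤ χ) :
    (w + w⁻¹) / 2 ∈ bernsteinEllipse χ := by
  set t := ‖w‖
  have hχ0 : 0 < χ := by linarith
  have ht : 0 < t := (inv_pos.2 hχ0).trans_le h1
  have hnormSq : Complex.normSq w = t ^ 2 := Complex.normSq_eq_norm_sq w
  have hunit : (w.re / t) ^ 2 + (w.im / t) ^ 2 = 1 := by
    have : w.re ^ 2 + w.im ^ 2 = t ^ 2 := by rw [← hnormSq, Complex.normSq_apply]; ring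
    rw [div_pow, div_pow, ← add_div, this, div_self (by positivity)]
  have hre : ((w + w⁻¹) / 2).re = (t + t⁻¹) / 2 * (w.re / t) := by
    simp [Complex.inv_re, hnormSq]
    field_simp
  have him : ((w + w⁻¹) / 2).im = (t - t⁻¹) / 2 * (w.im / t) := by
    simp [Complex.inv_im, hnormSq]
    field_simp
    ring
  have hplus : (t + t⁻¹) ^ 2 ≤ (χ + χ⁻¹) ^ 2 :=
    pow_le_pow_left₀ (by positivity) (add_inv_le_add_inv ht h1 h2) 2
  have hsq : ∀ s : ℝ, s ≠ 0 → (s - s⁻¹) ^ 2 = (s + s⁻¹) ^ 2 - 4 := fun s hs => by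
    field_simp; ring
  have hminus : (t - t⁻¹) ^ 2 ≤ (χ - χ⁻¹) ^ 2 := by
    rw [hsq t ht.ne', hsq χ hχ0.ne']
    linarith
  have hχinv : χ⁻¹ < χ := (inv_lt_one_of_one_lt₀ hχ).trans hχ
  have ha : (t + t⁻¹) ^ 2 / (χ + χ⁻¹) ^ 2 ≤ 1 := div_le_one_of_le₀ hplus (by positivity)
  have hb : (t - t⁻¹) ^ 2 / (χ - χ⁻¹) ^ 2 ≤ 1 := div_le_one_of_le₀ hminus (by positivity)
  show ((w + w⁻¹) / 2).re ^ 2 / (χ + χ⁻¹) ^ 2 + ((w + w⁻¹) / 2).im ^ 2 / (χ - χ⁻¹) ^ 2 ≤ 1 / 4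
  calc _ = (t + t⁻¹) ^ 2 / (χ + χ⁻¹) ^ 2 * (w.re / t) ^ 2 / 4
        + (t - t⁻¹) ^ 2 / (χ - χ⁻¹) ^ 2 * (w.im / t) ^ 2 / 4 := by rw [hre, him]; ring
    _ ≤ 1 * (w.re / t) ^ 2 / 4 + 1 * (w.im / t) ^ 2 / 4 := by gcongr
    _ = 1 / 4 := by linarith

variable {χ M : ℝ} {F : ℂ → ℂ}

lemma cosCircle_mem (hχ : 1 < χ) (x : AddCircle (2 * π)) : cosCircle x ∈ bernsteinEllipse χ := by
  induction x using QuotientAddGroup.induction_on with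
  | H θ =>
    rw [cosCircle_coe, ← Complex.ofReal_cos]
    exact ofReal_mem hχ ⟨neg_one_le_cos θ, cos_le_one θ⟩

lemma norm_fourierCoeff_le (hχ : 1 < χ) (hF : AnalyticOnNhd ℂ F (bernsteinEllipse χ))
    (hM : ∀ z ∈ bernsteinEllipse χ, ‖F z‖ ≤ M) (n : ℤ) :
    ‖fourierCoeff (fun x => F (cosCircle x)) n‖ ≤ M * χ⁻¹ ^ n.natAbs := by
  set G : ℂ → ℂ := fun z => z ^ (-n - 1) * F ((z + z⁻¹) / 2)
  have hχ₀ : 0 < χ⁻¹ := inv_pos.2 (zero_lt_one.trans hχ)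
  have hχ₁ : χ⁻¹ ≤ 1 := inv_le_one_of_one_le₀ hχ.le
  have hJ : ∀ z : ℂ, χ⁻¹ ≤ ‖z‖ → ‖z‖ ≤ χ → (z + z⁻¹) / 2 ∈ bernsteinEllipse χ :=
    fun z h₁ h₂ => joukowski_mem hχ h₁ h₂
  have hG : ∀ z : ℂ, χ⁻¹ ≤ ‖z‖ → ‖z‖ ≤ χ → DifferentiableAt ℂ G z := by
    intro z h₁ h₂
    have hz : z ≠ 0 := norm_pos_iff.1 (hχ₀.trans_le h₁)
    exact (differentiableAt_zpow.2 (Or.inl hz)).mul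
      ((hF _ (hJ z h₁ h₂)).differentiableAt.comp z
        ((differentiableAt_id.add (differentiableAt_inv hz)).div_const 2))
  -- shifting the contour to radius `ρ` gives the Cauchy estimate `ρ⁻ⁿ M`
  have hbound : ∀ ρ ∈ Set.Icc χ⁻¹ χ,
      ‖fourierCoeff (fun x => F (cosCircle x)) n‖ ≤ M * ρ ^ (-n) := by
    intro ρ hρ
    have hρ₀ : 0 < ρ := hχ₀.trans_le hρ.1
    have hsphere : ∀ z ∈ Metric.sphere (0 : ℂ) ρ, ‖G z‖ ≤ ρ ^ (-n - 1) * M := by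
      intro z hz
      rw [mem_sphere_zero_iff_norm] at hz
      rw [norm_mul, norm_zpow, hz]
      exact mul_le_mul_of_nonneg_left (hM _ (hJ z (hz ▸ hρ.1) (hz ▸ hρ.2))) (by positivity)
    have h := circleIntegral.norm_integral_le_of_norm_le_const hρ₀.le hsphere
    rw [circleIntegral_eq_of_differentiableAt_annulus hχ₀ hG hρ ⟨hχ₁, hχ.le⟩,
      circleIntegral_zpow_mul_joukowski] at h
    have hρn : ρ * (ρ ^ (-n - 1) * M) = M * ρ ^ (-n) := by
      rw [← mul_assoc, ← zpow_one_add₀ hρ₀.ne', mul_comm]; ring_nf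
    rw [norm_mul, norm_mul, norm_mul, Complex.norm_I, mul_one, Complex.norm_two,
      Complex.norm_real, norm_of_nonneg pi_pos.le, mul_assoc _ ρ, hρn] at h
    exact le_of_mul_le_mul_left h two_pi_pos
  rcases Int.eq_nat_or_neg n with ⟨m, rfl | rfl⟩
  · simpa using hbound χ ⟨hχ₁.trans hχ.le, le_rfl⟩
  · simpa using hbound χ⁻¹ ⟨le_rfl, hχ₁.trans hχ.le⟩

lemma summable_fourierCoeff (hχ : 1 < χ) (hF : AnalyticOnNhd ℂ F (bernsteinEllipse χ))
    (hM : ∀ z ∈ bernsteinEllipse χ, ‖F z‖ ≤ M) :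
    Summable (fourierCoeff fun x => F (cosCircle x)) := by
  have hgeom : Summable fun m : ℕ => M * χ⁻¹ ^ m :=
    (summable_geometric_of_lt_one (inv_nonneg.2 (zero_le_one.trans hχ.le))
      (inv_lt_one_of_one_lt₀ hχ)).mul_left M
  exact .of_norm_bounded (.of_nat_of_neg (by simpa using hgeom) (by simpa using hgeom))
    (norm_fourierCoeff_le hχ hF hM)

lemma hasSum_fourierCoeff_mul_T (hχ : 1 < χ) (hF : AnalyticOnNhd ℂ F (bernsteinEllipse χ))
    (hM : ∀ z ∈ bernsteinEllipse χ, ‖F z‖ ≤ M) {x : ℝ} (hx : x ∈ Set.Icc (-1 : ℝ) 1) :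
    HasSum (fun n : ℤ => fourierCoeff (fun y => F (cosCircle y)) n *
      (Polynomial.Chebyshev.T ℂ n).eval (x : ℂ)) (F x) := by
  set c := fourierCoeff (fun y => F (cosCircle y))
  have hc : Summable c := summable_fourierCoeff hχ hF hM
  let f : C(AddCircle (2 * π), ℂ) := ⟨fun y => F (cosCircle y), continuous_iff_continuousAt.2
    fun y => (hF _ (cosCircle_mem hχ y)).continuousAt.comp cosCircle.continuous.continuousAt⟩
  set θ := arccos x
  have hθ : Complex.cos θ = x := by rw [← Complex.ofReal_cos, cos_arccos hx.1 hx.2]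
  have hplus := has_pointwise_sum_fourier_series_of_summable (f := f) hc θ
  have hminus := has_pointwise_sum_fourier_series_of_summable (f := f) hc (-θ : ℝ)
  -- averaging the Fourier series at `±θ` leaves the cosine series `∑ cₙ cos (nθ)`
  have hT : ∀ n : ℤ, (Polynomial.Chebyshev.T ℂ n).eval (x : ℂ) =
      (fourier n (θ : AddCircle (2 * π)) + fourier n ((-θ : ℝ) : AddCircle (2 * π))) / 2 := by
    intro n
    rw [← hθ, Polynomial.Chebyshev.T_complex_cos, fourier_coe_two_pi, fourier_coe_two_pi,
      Complex.cos]
    push_cast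
    ring_nf
  have hFx : F x = (f θ + f (-θ : ℝ)) / 2 := by
    simp only [f, ContinuousMap.coe_mk, cosCircle_coe]
    push_cast
    rw [Complex.cos_neg, hθ, add_self_div_two]
  rw [hFx]
  refine ((hplus.add hminus).div_const 2).congr_fun fun n => ?_
  change c n * _ = (c n * _ + c n * _) / 2
  rw [hT]
  ring

theorem exists_polynomial_approx (hχ : 1 < χ) (hF : AnalyticOnNhd ℂ F (bernsteinEllipse χ))
    (hM : ∀ z ∈ bernsteinEllipse χ, ‖F z‖ ≤ M) (k : ℕ) :
    ∃ q : Polynomial ℂ, q.natDegree ≤ k ∧ ∀ x ∈ Set.Icc (-1 : ℝ) 1,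
      ‖F x - q.eval (x : ℂ)‖ ≤ 2 * M * χ⁻¹ ^ k / (χ - 1) := by
  set c := fourierCoeff (fun y => F (cosCircle y))
  set s := Finset.Icc (-(k : ℤ)) k
  have hs : ∀ n : ℤ, n ∈ s ↔ n.natAbs ≤ k := fun n => by simp only [s, Finset.mem_Icc]; omega
  refine ⟨∑ n ∈ s, Polynomial.C (c n) * Polynomial.Chebyshev.T ℂ n, ?_, fun x hx => ?_⟩
  · refine Polynomial.natDegree_sum_le_of_forall_le _ _ fun n hn => ?_
    exact (Polynomial.natDegree_C_mul_le _ _).trans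
      ((Polynomial.Chebyshev.natDegree_T ℂ n).trans_le ((hs n).1 hn))
  set a : ℤ → ℂ := fun n => c n * (Polynomial.Chebyshev.T ℂ n).eval (x : ℂ)
  have hq : HasSum (fun n => if n.natAbs ≤ k then a n else 0)
      ((∑ n ∈ s, Polynomial.C (c n) * Polynomial.Chebyshev.T ℂ n).eval (x : ℂ)) := by
    have hval : (∑ n ∈ s, Polynomial.C (c n) * Polynomial.Chebyshev.T ℂ n).eval (x : ℂ) =
        ∑ n ∈ s, if n.natAbs ≤ k then a n else 0 := by
      rw [Polynomial.eval_finsetSum]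
      refine Finset.sum_congr rfl fun n hn => ?_
      rw [if_pos ((hs n).1 hn), Polynomial.eval_mul, Polynomial.eval_C]
    rw [hval]
    exact hasSum_sum_of_ne_finset_zero fun n hn => if_neg (mt (hs n).2 hn)
  have hr₀ : 0 ≤ χ⁻¹ := inv_nonneg.2 (zero_le_one.trans hχ.le)
  have hr₁ : χ⁻¹ < 1 := inv_lt_one_of_one_lt₀ hχ
  have htail := (hasSum_geometric_natAbs_tail hr₀ hr₁ k).mul_left M
  have hχ₀ : χ ≠ 0 := (zero_lt_one.trans hχ).ne'
  have hχ₁ : χ - 1 ≠ 0 := sub_ne_zero.2 hχ.ne'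
  rw [show M * (2 * χ⁻¹ ^ (k + 1) / (1 - χ⁻¹)) = 2 * M * χ⁻¹ ^ k / (χ - 1) by
    rw [pow_succ]; field_simp] at htail
  refine ((hasSum_fourierCoeff_mul_T hχ hF hM hx).sub hq).norm_le_of_bounded htail fun n => ?_
  split_ifs with hn
  · rw [mul_zero, norm_le_zero_iff]
    exact sub_self _
  · rw [sub_zero, norm_mul]
    exact (mul_le_of_le_one_right (norm_nonneg _)
      (Polynomial.Chebyshev.norm_eval_T_le_one n hx)).trans (norm_fourierCoeff_le hχ hF hM n)

end BernsteinEllipse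

namespace lp

variable {𝕜 : Type*} [RCLike 𝕜]

def entry (A : lp (fun _ : ℕ => 𝕜) 2 →L[𝕜] lp (fun _ : ℕ => 𝕜) 2) (i j : ℕ) : 𝕜 :=
  inner 𝕜 (lp.single 2 i (1 : 𝕜)) (A (lp.single 2 j 1))

def IsBanded (A : lp (fun _ : ℕ => 𝕜) 2 →L[𝕜] lp (fun _ : ℕ => 𝕜) 2) (w : ℝ) : Prop :=
  ∀ i j : ℕ, w < |(i : ℝ) - j| → entry A i j = 0

variable (A B : lp (fun _ : ℕ => 𝕜) 2 →L[𝕜] lp (fun _ : ℕ => 𝕜) 2)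

lemma inner_single_one_left (i : ℕ) (f : lp (fun _ : ℕ => 𝕜) 2) :
    inner 𝕜 (lp.single 2 i (1 : 𝕜)) f = f i := by
  simp [lp.inner_single_left]

lemma norm_entry_le (i j : ℕ) : ‖entry A i j‖ ≤ ‖A‖ := by
  have hnorm : ∀ k : ℕ, ‖(lp.single 2 k 1 : lp (fun _ : ℕ => 𝕜) 2)‖ = 1 := fun k => by
    rw [lp.norm_single (by norm_num), norm_one]
  calc ‖entry A i j‖ ≤ 1 * ‖A (lp.single 2 j 1)‖ := hnorm i ▸ norm_inner_le_norm _ _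
    _ ≤ 1 * (‖A‖ * 1) := by grw [A.le_opNorm, hnorm]
    _ = ‖A‖ := by ring

lemma entry_sub (i j : ℕ) : entry (A - B) i j = entry A i j - entry B i j := by
  simp [entry, inner_sub_right]

lemma hasSum_entry_mul (i j : ℕ) :
    HasSum (fun m => entry A i m * entry B m j) (entry (A * B) i j) := by
  have hB := lp.hasSum_single (p := 2) (by norm_num) (B (lp.single 2 j (1 : 𝕜)))
  convert (innerSL 𝕜 (lp.single 2 i (1 : 𝕜))).hasSum (A.hasSum hB) using 1
  · funext m
    have : lp.single (E := fun _ : ℕ => 𝕜) 2 m (B (lp.single 2 j 1) m) =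
        entry B m j • lp.single 2 m 1 := by
      rw [← lp.single_smul, smul_eq_mul, mul_one, entry, inner_single_one_left]
    simp [this, entry, mul_comm]
  · rfl

namespace IsBanded

variable {A B} {w v : ℝ}

lemma one : IsBanded (1 : lp (fun _ : ℕ => 𝕜) 2 →L[𝕜] lp (fun _ : ℕ => 𝕜) 2) 0 := by
  intro i j hij
  have : i ≠ j := by rintro rfl; simp at hij
  simp [entry, inner_single_one_left, lp.single_apply, this]

lemma mono (hA : IsBanded A w) (hwv : w ≤ v) : IsBanded A v :=
  fun i j hij => hA i j (hwv.trans_lt hij)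

lemma mul (hA : IsBanded A w) (hB : IsBanded B v) : IsBanded (A * B) (w + v) := by
  intro i j hij
  refine (hasSum_entry_mul A B i j).unique (hasSum_zero.congr_fun fun m => ?_)
  have : w < |(i : ℝ) - m| ∨ v < |(m : ℝ) - j| := by
    by_contra! h
    linarith [abs_sub_le (i : ℝ) m j]
  rcases this with h | h
  · rw [hA i m h, zero_mul]
  · rw [hB m j h, mul_zero]

lemma pow (hA : IsBanded A w) (k : ℕ) : IsBanded (A ^ k) (k * w) := by
  induction k with
  | zero => simpa using one
  | succ k ih => simpa [pow_succ, add_mul] using ih.mul hA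

lemma smul (hA : IsBanded A w) (c : 𝕜) : IsBanded (c • A) w := by
  intro i j hij
  rw [entry, smul_apply, inner_smul_right]
  exact mul_eq_zero_of_right c (hA i j hij)

lemma sum {ι : Type*} (s : Finset ι) {A : ι → lp (fun _ : ℕ => 𝕜) 2 →L[𝕜] lp (fun _ : ℕ => 𝕜) 2}
    (hA : ∀ n ∈ s, IsBanded (A n) w) : IsBanded (∑ n ∈ s, A n) w := by
  intro i j hij
  simp only [entry, sum_apply, inner_sum]
  exact Finset.sum_eq_zero fun n hn => hA n hn i j hij

lemma aeval (hA : IsBanded A w) (hw : 0 ≤ w) {q : Polynomial 𝕜} {k : ℕ} (hq : q.natDegree ≤ k) :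
    IsBanded (Polynomial.aeval A q) (k * w) := by
  rw [Polynomial.aeval_eq_sum_range' (Nat.lt_succ_of_le hq)]
  refine sum _ fun n hn => ((hA.pow n).smul _).mono ?_
  have : (n : ℝ) ≤ k := by exact_mod_cast Nat.lt_succ_iff.mp (Finset.mem_range.mp hn)
  exact mul_le_mul_of_nonneg_right this hw

end IsBanded

lemma norm_entry_le_norm_sub_aeval {D : lp (fun _ : ℕ => 𝕜) 2 →L[𝕜] lp (fun _ : ℕ => 𝕜) 2}
    {w : ℝ} (hD : IsBanded D w) (hw : 0 ≤ w) {q : Polynomial 𝕜} {k : ℕ} (hq : q.natDegree ≤ k)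
    {i j : ℕ} (hij : k * w < |(i : ℝ) - j|) :
    ‖entry A i j‖ ≤ ‖A - Polynomial.aeval D q‖ := by
  rw [← sub_zero (entry A i j), ← hD.aeval hw hq i j hij, ← entry_sub]
  exact norm_entry_le _ i j

end lp

lemma norm_cfc_sub_aeval_le {A : Type*} [CStarAlgebra A] {D : A} [IsStarNormal D]
    (hspec : spectrum ℂ D ⊆ Complex.ofReal '' Set.Icc (-1 : ℝ) 1) {F : ℂ → ℂ}
    (hF : ContinuousOn F (spectrum ℂ D)) {q : Polynomial ℂ} {ε : ℝ}
    (hq : ∀ x ∈ Set.Icc (-1 : ℝ) 1, ‖F x - q.eval (x : ℂ)‖ ≤ ε) :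
    ‖cfc F D - Polynomial.aeval D q‖ ≤ ε := by
  have hε : 0 ≤ ε := (norm_nonneg _).trans (hq 0 ⟨by norm_num, by norm_num⟩)
  rw [← cfc_polynomial q D, ← cfc_sub F (fun z => q.eval z) D]
  refine norm_cfc_le hε fun z hz => ?_
  obtain ⟨x, hx, rfl⟩ := hspec hz
  exact hq x hx

end

theorem benzi_golub_exponential_decay_general
    (b : ℕ)
    (D : lp (fun _ : ℕ => ℂ) 2 →L[ℂ] lp (fun _ : ℕ => ℂ) 2)
    (hD : IsSelfAdjoint D)
    (hband : ∀ i j : ℕ, (b : ℝ) / 2 < |(i : ℝ) - (j : ℝ)| →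
      (inner ℂ (lp.single 2 i (1 : ℂ)) (D (lp.single 2 j (1 : ℂ))) : ℂ) = 0)
    (hspec : spectrum ℂ D ⊆ Complex.ofReal '' Set.Icc (-1 : ℝ) 1)
    (χ : ℝ) (hχ : 1 < χ)
    (F : ℂ → ℂ)
    (hF : AnalyticOnNhd ℂ F (bernsteinEllipse χ))
    (Mχ : ℝ)
    (hMχ : IsGreatest ((fun z => ‖F z‖) '' bernsteinEllipse χ) Mχ) :
    ∀ i j : ℕ,
      ‖(inner ℂ (lp.single 2 i (1 : ℂ)) ((cfc F D) (lp.single 2 j (1 : ℂ))) : ℂ)‖ ≤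
        max (2 * χ * Mχ / (χ - 1)) ‖cfc F D‖ *
          (χ ^ (-(2 / (b : ℝ)))) ^ ((i : ℤ) - (j : ℤ)).natAbs := by
  intro i j
  change ‖lp.entry (cfc F D) i j‖ ≤ _
  have := hD.isStarNormal
  have hM : ∀ z ∈ bernsteinEllipse χ, ‖F z‖ ≤ Mχ := fun z hz => hMχ.2 ⟨z, hz, rfl⟩
  have hK : 0 ≤ 2 * χ * Mχ / (χ - 1) := by
    obtain ⟨z, -, rfl⟩ := hMχ.1
    have := sub_pos.2 hχ
    positivity
  set n := ((i : ℤ) - j).natAbs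
  rcases Nat.eq_zero_or_pos n with hn | hn
  · rw [hn, pow_zero, mul_one]
    exact (lp.norm_entry_le _ i j).trans (le_max_right _ _)
  obtain ⟨k, hkn, hnk⟩ :=
    exists_nat_mul_lt_and_div_le_succ (by positivity : (0 : ℝ) ≤ b / 2) (Nat.cast_pos.2 hn)
  obtain ⟨q, hq, hFq⟩ := BernsteinEllipse.exists_polynomial_approx hχ hF hM k
  have hFD : ContinuousOn F (spectrum ℂ D) := hF.continuousOn.mono fun z hz => by
    obtain ⟨x, hx, rfl⟩ := hspec hz
    exact BernsteinEllipse.ofReal_mem hχ hx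
  calc ‖lp.entry (cfc F D) i j‖ ≤ ‖cfc F D - Polynomial.aeval D q‖ :=
        lp.norm_entry_le_norm_sub_aeval _ hband (by positivity) hq (by simpa [n] using hkn)
    _ ≤ 2 * Mχ * χ⁻¹ ^ k / (χ - 1) := norm_cfc_sub_aeval_le hspec hFD hFq
    _ = 2 * χ * Mχ / (χ - 1) * χ⁻¹ ^ (k + 1) := by rw [pow_succ]; field_simp
    _ ≤ 2 * χ * Mχ / (χ - 1) * (χ ^ (-(2 / (b : ℝ)))) ^ n := by
        rw [← inv_div (b : ℝ) 2]
        exact mul_le_mul_of_nonneg_left (inv_pow_succ_le_rpow_pow hχ.le hnk) hK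
    _ ≤ _ := by gcongr; exact le_max_left _ _

/-- Entrywise exponential decay for analytic functions of a banded self-adjoint
operator with spectrum in `[-1,1]` (Benzi–Golub). -/
theorem benzi_golub_exponential_decay
    (b : ℕ) (hb_pos : 0 < b) (hb_even : Even b)
    (D : lp (fun _ : ℕ => ℂ) 2 →L[ℂ] lp (fun _ : ℕ => ℂ) 2)
    (hD : IsSelfAdjoint D)
    (hband : ∀ i j : ℕ, (b : ℝ) / 2 < |(i : ℝ) - (j : ℝ)| →
      (inner ℂ (lp.single 2 i (1 : ℂ)) (D (lp.single 2 j (1 : ℂ))) : ℂ) = 0)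
    (hspec : spectrum ℂ D ⊆ Complex.ofReal '' Set.Icc (-1 : ℝ) 1)
    (χ : ℝ) (hχ : 1 < χ)
    (F : ℂ → ℂ)
    (hF : AnalyticOnNhd ℂ F (bernsteinEllipse χ))
    (Mχ : ℝ)
    (hMχ : IsGreatest ((fun z => ‖F z‖) '' bernsteinEllipse χ) Mχ) :
    ∀ i j : ℕ,
      ‖(inner ℂ (lp.single 2 i (1 : ℂ)) ((cfc F D) (lp.single 2 j (1 : ℂ))) : ℂ)‖ ≤
        max (2 * χ * Mχ / (χ - 1)) ‖cfc F D‖ *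
          (χ ^ (-(2 / (b : ℝ)))) ^ ((i : ℤ) - (j : ℤ)).natAbs :=
  benzi_golub_exponential_decay_general b D hD hband hspec χ hχ F hF Mχ hMχ
end
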